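/- arXiv:1804.07560 — 2 statements merged into one kernel-verified Lean document; each statement's English description precedes it below -/
import Mathlib

section
/- Let d ≥ 0 and λ_0,...,λ_d be arbitrary integers not all zero. Then for every infinite set A ⊆ ℕ, limsup_{n→∞} |Σ_{i=0}^d λ_i·R_A(n-i)| ≥ limsup_{n→∞} |Σ_{i=0}^d λ_i|/(2(d+1)^2) · (B(A,λ,n)/√n)^2. -/
open Filter Finset
open scoped Classical

/-- Number of ordered pairs (a,a') with a,a' ∈ A and a+a' = n. -/
noncomputable def Rf (A : Set ℕ) (n : ℕ) : ℕ :=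
  Nat.card {p : ℕ × ℕ | p.1 ∈ A ∧ p.2 ∈ A ∧ p.1 + p.2 = n}

/-- Rf extended to ℤ by 0 on negatives. -/
noncomputable def Rz (A : Set ℕ) (k : ℤ) : ℕ :=
  if 0 ≤ k then Rf A k.toNat else 0

/-- Counting function A(n) = #{a ∈ A : a ≤ n}. -/
noncomputable def cnt (A : Set ℕ) (n : ℕ) : ℕ :=
  Nat.card {a : ℕ | a ∈ A ∧ a ≤ n}

/-- Characteristic function of A, extended by 0 to negative integers. -/
noncomputable def chi (A : Set ℕ) (k : ℤ) : ℤ :=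
  if 0 ≤ k ∧ k.toNat ∈ A then 1 else 0

/-- B(A, λ, n) = #{m ≤ n : ∑_{i=0}^d λ_i χ_A(m-i) ≠ 0}. -/
noncomputable def Bf (A : Set ℕ) (lam : ℕ → ℤ) (d : ℕ) (n : ℕ) : ℕ :=
  Nat.card {m : ℕ | m ≤ n ∧ ∑ i ∈ Finset.range (d+1), lam i * chi A ((m : ℤ) - i) ≠ 0}

/-!
Write `g(m) = ∑ᵢ λᵢ R_A(m - i)`, `s = ∑ᵢ λᵢ` and `A(n) = #(A ∩ [0, n])`. Summing `g` over `m ≤ N`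
gives `∑ᵢ λᵢ ∑_{m < N - i} R_A(m)`, which differs from `s ∑_{m < N} R_A(m)` by at most
`d (∑ᵢ |λᵢ|) A(N)`, and for `N = 2n + 1` the inner sum counts all pairs with sum `≤ 2n`, so it is at
least `A(n)²`. If `|g| ≤ C` eventually, this first gives `A(n) = O(√n)`, so the error term is `o(n)`,
and then `|s| A(n)² ≤ (2C + o(1)) n`. Finally `B(A, λ, n) ≤ (d + 1) A(n)`, because `m` contributes to
`B` only if `m - i ∈ A` for some `i ≤ d`.
-/

lemma Rf_eq_card (A : Set ℕ) (m : ℕ) :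
    Rf A m = ((antidiagonal m).filter fun p => p.1 ∈ A ∧ p.2 ∈ A).card := by
  have h : {p : ℕ × ℕ | p.1 ∈ A ∧ p.2 ∈ A ∧ p.1 + p.2 = m} =
      ↑((antidiagonal m).filter fun p => p.1 ∈ A ∧ p.2 ∈ A) := by
    ext p
    simp only [Set.mem_ofPred_eq, coe_filter, HasAntidiagonal.mem_antidiagonal]
    tauto
  rw [Rf, h, Nat.card_coe_set_eq, Set.ncard_coe_finset]

lemma cnt_eq_card (A : Set ℕ) (n : ℕ) : cnt A n = ((Iic n).filter (· ∈ A)).card := by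
  have h : {a : ℕ | a ∈ A ∧ a ≤ n} = ↑((Iic n).filter (· ∈ A)) := by
    ext a
    simp only [Set.mem_ofPred_eq, coe_filter, mem_Iic]
    tauto
  rw [cnt, h, Nat.card_coe_set_eq, Set.ncard_coe_finset]

lemma cnt_le_succ (A : Set ℕ) (n : ℕ) : cnt A n ≤ n + 1 := by
  rw [cnt_eq_card, ← Nat.card_Iic n]
  exact card_filter_le _ _

lemma cnt_mono (A : Set ℕ) : Monotone (cnt A) := fun m n hmn => by
  simp only [cnt_eq_card]
  exact card_le_card (filter_subset_filter _ (Iic_subset_Iic.2 hmn))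

lemma Rf_le_cnt (A : Set ℕ) (m : ℕ) : Rf A m ≤ cnt A m := by
  rw [Rf_eq_card, cnt_eq_card]
  refine card_le_card_of_injOn Prod.fst (fun p hp => ?_) fun p hp q hq hpq => ?_
  · simp only [coe_filter, HasAntidiagonal.mem_antidiagonal, Set.mem_ofPred_eq, mem_Iic] at hp ⊢
    exact ⟨by omega, hp.2.1⟩
  · simp only [coe_filter, HasAntidiagonal.mem_antidiagonal, Set.mem_ofPred_eq] at hp hq
    have h1 : p.1 = q.1 := hpq
    exact Prod.ext h1 (by omega)

lemma cnt_sq_le_sum_Rf (A : Set ℕ) (n : ℕ) :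
    cnt A n ^ 2 ≤ ∑ m ∈ range (2 * n + 1), Rf A m := by
  simp only [cnt_eq_card, Rf_eq_card, sq, ← card_product, ← card_sigma]
  refine card_le_card_of_injOn (fun p => ⟨p.1 + p.2, p⟩) (fun p hp => ?_)
    fun p _ q _ hpq => eq_of_heq (Sigma.mk.inj_iff.1 hpq).2
  simp only [coe_product, coe_filter, Set.mem_prod, Set.mem_ofPred_eq, mem_Iic] at hp
  simp only [coe_sigma, Set.mem_sigma_iff, mem_coe, mem_range, mem_filter,
    HasAntidiagonal.mem_antidiagonal]
  exact ⟨by omega, trivial, hp.1.2, hp.2.2⟩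

lemma sum_range_Rz_sub (A : Set ℕ) (i N : ℕ) :
    ∑ m ∈ range N, Rz A ((m : ℤ) - i) = ∑ m ∈ range (N - i), Rf A m := by
  induction N with
  | zero => simp
  | succ N ih =>
    rw [sum_range_succ, ih, Rz]
    rcases le_or_gt i N with h | h
    · rw [if_pos (by omega), show N + 1 - i = N - i + 1 by omega, sum_range_succ]
      congr
      omega
    · rw [if_neg (by omega), show N + 1 - i = N - i by omega, add_zero]

lemma sum_range_Rf_le_sub_add (A : Set ℕ) (N i : ℕ) :
    ∑ m ∈ range N, Rf A m ≤ ∑ m ∈ range (N - i), Rf A m + i * cnt A N := by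
  rw [← sum_range_add_sum_Ico _ (N.sub_le i)]
  gcongr
  calc ∑ m ∈ Ico (N - i) N, Rf A m ≤ ∑ _m ∈ Ico (N - i) N, cnt A N :=
        sum_le_sum fun m hm => (Rf_le_cnt A m).trans (cnt_mono A (mem_Ico.1 hm).2.le)
    _ ≤ i * cnt A N := by
        rw [sum_const, Nat.card_Ico, smul_eq_mul]
        gcongr
        omega

lemma Bf_le_mul_cnt (A : Set ℕ) (lam : ℕ → ℤ) (d n : ℕ) : Bf A lam d n ≤ (d + 1) * cnt A n := by
  have hsub : {m : ℕ | m ≤ n ∧ ∑ i ∈ range (d + 1), lam i * chi A ((m : ℤ) - i) ≠ 0} ⊆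
      ↑(image₂ (· + · : ℕ → ℕ → ℕ) ((Iic n).filter (· ∈ A)) (range (d + 1))) := by
    rintro m ⟨hmn, hm⟩
    obtain ⟨i, hi, hne⟩ := exists_ne_zero_of_sum_ne_zero hm
    have hchi : chi A ((m : ℤ) - i) ≠ 0 := right_ne_zero_of_mul hne
    rw [chi] at hchi
    split_ifs at hchi with h
    · rw [show ((m : ℤ) - i).toNat = m - i by omega] at h
      simp only [coe_image₂, Set.mem_image2, coe_filter, mem_Iic, Set.mem_ofPred_eq, mem_coe]
      exact ⟨m - i, ⟨by omega, h.2⟩, i, hi, by omega⟩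
    · exact absurd rfl hchi
  calc Bf A lam d n ≤ _ := Nat.card_mono (finite_toSet _) hsub
    _ ≤ ((Iic n).filter (· ∈ A)).card * (range (d + 1)).card := by
        rw [Nat.card_coe_set_eq, Set.ncard_coe_finset]
        exact card_image₂_le (γ := ℕ) _ _ _
    _ = (d + 1) * cnt A n := by rw [cnt_eq_card, card_range, mul_comm]

lemma abs_sum_mul_sum_Rf_le (A : Set ℕ) (lam : ℕ → ℤ) (d N : ℕ) :
    |((∑ i ∈ range (d + 1), lam i : ℤ) : ℝ)| * ∑ m ∈ range N, (Rf A m : ℝ) ≤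
      |∑ m ∈ range N, ∑ i ∈ range (d + 1), (lam i : ℝ) * Rz A ((m : ℤ) - i)| +
        (∑ i ∈ range (d + 1), |(lam i : ℝ)|) * d * cnt A N := by
  set S : ℕ → ℝ := fun K => ∑ m ∈ range K, (Rf A m : ℝ) with hS
  have hshift : ∑ m ∈ range N, ∑ i ∈ range (d + 1), (lam i : ℝ) * Rz A ((m : ℤ) - i) =
      ∑ i ∈ range (d + 1), (lam i : ℝ) * S (N - i) := by
    rw [sum_comm]
    refine sum_congr rfl fun i _ => ?_
    rw [← mul_sum]
    simp only [hS]
    exact_mod_cast congrArg (fun k : ℕ => (lam i : ℝ) * k) (sum_range_Rz_sub A i N)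
  have hdiff : ∀ i ∈ range (d + 1), |S N - S (N - i)| ≤ d * cnt A N := by
    intro i hi
    have hmono : S (N - i) ≤ S N := by
      simp only [hS]
      exact_mod_cast sum_le_sum_of_subset (f := Rf A) (range_subset_range.2 (N.sub_le i))
    have hgap : S N ≤ S (N - i) + i * cnt A N := by
      simp only [hS]
      exact_mod_cast sum_range_Rf_le_sub_add A N i
    have hid : (i : ℝ) ≤ d := by exact_mod_cast Nat.lt_succ_iff.1 (mem_range.1 hi)
    rw [abs_of_nonneg (sub_nonneg.2 hmono)]
    nlinarith [(cnt A N).cast_nonneg (α := ℝ)]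
  have hS0 : 0 ≤ S N := sum_nonneg fun m _ => (Rf A m).cast_nonneg
  calc |((∑ i ∈ range (d + 1), lam i : ℤ) : ℝ)| * S N
      = |∑ i ∈ range (d + 1), (lam i : ℝ) * S (N - i) +
          ∑ i ∈ range (d + 1), (lam i : ℝ) * (S N - S (N - i))| := by
        rw [← sum_add_distrib, ← abs_of_nonneg hS0, ← abs_mul, abs_of_nonneg hS0]
        push_cast
        rw [sum_mul]
        congr 1
        exact sum_congr rfl fun i _ => by ring
    _ ≤ |∑ i ∈ range (d + 1), (lam i : ℝ) * S (N - i)| +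
          ∑ i ∈ range (d + 1), |(lam i : ℝ)| * (d * cnt A N) := by
        refine (abs_add_le _ _).trans ?_
        gcongr
        refine (abs_sum_le_sum_abs _ _).trans (sum_le_sum fun i hi => ?_)
        rw [abs_mul]
        exact mul_le_mul_of_nonneg_left (hdiff i hi) (abs_nonneg _)
    _ = _ := by rw [hshift, mul_assoc, sum_mul]

lemma abs_sum_mul_cnt_sq_le (A : Set ℕ) (lam : ℕ → ℤ) (d n : ℕ) :
    |((∑ i ∈ range (d + 1), lam i : ℤ) : ℝ)| * (cnt A n : ℝ) ^ 2 ≤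
      ∑ m ∈ range (2 * n + 1), |∑ i ∈ range (d + 1), (lam i : ℝ) * Rz A ((m : ℤ) - i)| +
        (∑ i ∈ range (d + 1), |(lam i : ℝ)|) * d * cnt A (2 * n + 1) := by
  have hcnt : (cnt A n : ℝ) ^ 2 ≤ ∑ m ∈ range (2 * n + 1), (Rf A m : ℝ) := by
    exact_mod_cast cnt_sq_le_sum_Rf A n
  calc _ ≤ |((∑ i ∈ range (d + 1), lam i : ℤ) : ℝ)| * ∑ m ∈ range (2 * n + 1), (Rf A m : ℝ) :=
        mul_le_mul_of_nonneg_left hcnt (abs_nonneg _)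
    _ ≤ _ := by
        refine (abs_sum_mul_sum_Rf_le A lam d _).trans ?_
        gcongr
        exact abs_sum_le_sum_abs _ _

lemma Bf_term_le_cnt_sq (A : Set ℕ) (lam : ℕ → ℤ) (d n : ℕ) :
    |((∑ i ∈ range (d + 1), lam i : ℤ) : ℝ)| / (2 * (d + 1) ^ 2) *
        ((Bf A lam d n : ℝ) / Real.sqrt n) ^ 2 ≤
      |((∑ i ∈ range (d + 1), lam i : ℤ) : ℝ)| * (cnt A n : ℝ) ^ 2 / (2 * n) := by
  have hB : (Bf A lam d n : ℝ) ≤ (d + 1) * cnt A n := by exact_mod_cast Bf_le_mul_cnt A lam d n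
  rw [div_pow, Real.sq_sqrt n.cast_nonneg]
  calc _ ≤ |((∑ i ∈ range (d + 1), lam i : ℤ) : ℝ)| / (2 * (d + 1) ^ 2) *
        (((d + 1) * cnt A n) ^ 2 / n) := by gcongr
    _ = _ := by field_simp

lemma exists_sum_range_le_add_mul {g : ℕ → ℝ} {C : ℝ} (hg : ∀ᶠ m in atTop, g m ≤ C) :
    ∃ D, ∀ N, ∑ m ∈ range N, g m ≤ D + N * C := by
  obtain ⟨M, hM⟩ := eventually_atTop.1 hg
  refine ⟨∑ m ∈ range M, |g m - C|, fun N => ?_⟩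
  suffices h : ∑ m ∈ range N, (g m - C) ≤ ∑ m ∈ range M, |g m - C| by
    rw [sum_sub_distrib, sum_const, card_range, nsmul_eq_mul] at h
    linarith
  rcases le_total N M with hNM | hMN
  · exact (sum_le_sum fun m _ => le_abs_self _).trans
      (sum_le_sum_of_subset_of_nonneg (range_subset_range.2 hNM) fun m _ _ => abs_nonneg _)
  · rw [← sum_range_add_sum_Ico _ hMN]
    have htail : ∑ m ∈ Ico M N, (g m - C) ≤ 0 :=
      sum_nonpos fun m hm => sub_nonpos.2 (hM m (mem_Ico.1 hm).1)
    linarith [sum_le_sum fun m (_ : m ∈ range M) => le_abs_self (g m - C)]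

lemma eventually_le_mul_of_sq_le {b : ℕ → ℝ} {K δ : ℝ} (hδ : 0 < δ)
    (hb : ∀ n, b n ^ 2 ≤ K * (n + 1)) : ∀ᶠ n in atTop, b n ≤ δ * n := by
  filter_upwards [tendsto_natCast_atTop_atTop.eventually_ge_atTop (max (2 * K / δ ^ 2) 1)]
    with n hn
  have hn1 : (1 : ℝ) ≤ n := le_of_max_le_right hn
  have hK : 2 * K ≤ δ ^ 2 * n := (div_le_iff₀' (by positivity)).1 (le_of_max_le_left hn)
  have hK0 : 0 ≤ K := by simpa using (sq_nonneg (b 0)).trans (hb 0)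
  have hsq : b n ^ 2 ≤ (δ * n) ^ 2 := calc
    b n ^ 2 ≤ K * (n + 1) := hb n
    _ ≤ 2 * K * n := by nlinarith
    _ ≤ (δ * n) ^ 2 := by nlinarith
  exact (abs_le_of_sq_le_sq hsq (by positivity)).trans' (le_abs_self _)

lemma eventually_mul_sq_le_of_sum_le {g a : ℕ → ℝ} {s L C C' : ℝ} (hs : 0 < s) (hCC' : C < C')
    (ha0 : ∀ n, 0 ≤ a n) (ha : ∀ n, a n ≤ n + 1)
    (hkey : ∀ n, s * a n ^ 2 ≤ ∑ m ∈ range (2 * n + 1), g m + L * a (2 * n + 1))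
    (hg : ∀ᶠ m in atTop, g m ≤ C) : ∀ᶠ n in atTop, s * a n ^ 2 ≤ 2 * C' * n := by
  obtain ⟨D, hD⟩ := exists_sum_range_le_add_mul hg
  have hbound : ∀ n, s * a n ^ 2 ≤ D + (2 * n + 1) * C + L * a (2 * n + 1) := fun n => by
    have := hD (2 * n + 1)
    push_cast at this
    linarith [hkey n]
  have hsqrt : ∀ n, a n ^ 2 ≤ (|D| + 2 * |C| + 2 * |L|) / s * (n + 1) := fun n => by
    have h1 := ha (2 * n + 1)
    have h2 := ha0 (2 * n + 1)
    push_cast at h1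
    rw [div_mul_eq_mul_div, le_div_iff₀ hs]
    nlinarith [hbound n, le_abs_self D, le_abs_self C, neg_abs_le C, le_abs_self L,
      neg_abs_le L, abs_nonneg C, abs_nonneg L, abs_nonneg D]
  have herror : ∀ᶠ n in atTop, L * a (2 * n + 1) ≤ (C' - C) * n := by
    refine eventually_le_mul_of_sq_le (K := 2 * L ^ 2 * ((|D| + 2 * |C| + 2 * |L|) / s))
      (sub_pos.2 hCC') fun n => ?_
    have := hsqrt (2 * n + 1)
    push_cast at this
    rw [mul_pow]
    nlinarith [sq_nonneg L]
  filter_upwards [herror, tendsto_natCast_atTop_atTop.eventually_ge_atTop ((D + C) / (C' - C))]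
    with n h1 h2
  rw [div_le_iff₀ (sub_pos.2 hCC')] at h2
  linarith [hbound n]

lemma limsup_coe_le_limsup_coe {α : Type*} {l : Filter α} {u v : α → ℝ}
    (h : ∀ C C' : ℝ, C < C' → (∀ᶠ x in l, u x ≤ C) → ∀ᶠ x in l, v x ≤ C') :
    limsup (fun x => (v x : EReal)) l ≤ limsup (fun x => (u x : EReal)) l := by
  refine EReal.le_of_forall_lt_iff_le.1 fun z hz => ?_
  obtain ⟨C, hC, hCz⟩ := EReal.exists_between_coe_real hz
  have hu : ∀ᶠ x in l, u x ≤ C :=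
    (eventually_lt_of_limsup_lt hC).mono fun x hx => (EReal.coe_lt_coe_iff.1 hx).le
  exact limsup_le_of_le (by isBoundedDefault)
    ((h C z (EReal.coe_lt_coe_iff.1 hCz) hu).mono fun x hx => EReal.coe_le_coe_iff.2 hx)

theorem stmt5_general (d : ℕ) (lam : ℕ → ℤ)
    (A : Set ℕ) :
    limsup (fun n : ℕ =>
        ((|∑ i ∈ Finset.range (d + 1), (lam i : ℝ) * Rz A ((n : ℤ) - i)| : ℝ) : EReal)) atTop
      ≥ limsup (fun n : ℕ =>
        ((|((∑ i ∈ Finset.range (d + 1), lam i : ℤ) : ℝ)| / (2 * (d + 1) ^ 2) *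
          ((Bf A lam d n : ℝ) / Real.sqrt n) ^ 2 : ℝ) : EReal)) atTop := by
  refine limsup_coe_le_limsup_coe fun C C' hCC' hg => ?_
  set s : ℝ := ((∑ i ∈ range (d + 1), lam i : ℤ) : ℝ)
  suffices h : ∀ᶠ n in atTop, |s| * (cnt A n : ℝ) ^ 2 / (2 * n) ≤ C' from
    h.mono fun n hn => (Bf_term_le_cnt_sq A lam d n).trans hn
  rcases (abs_nonneg s).eq_or_lt with hs | hs
  · obtain ⟨m, hm⟩ := hg.exists
    have hC' : 0 ≤ C' := ((abs_nonneg _).trans hm).trans hCC'.le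
    exact Eventually.of_forall fun n => by rw [← hs]; simpa using hC'
  · filter_upwards [eventually_mul_sq_le_of_sum_le hs hCC' (fun n => (cnt A n).cast_nonneg)
      (fun n => by exact_mod_cast cnt_le_succ A n) (abs_sum_mul_cnt_sq_le A lam d) hg,
      eventually_gt_atTop 0] with n hn hn0
    rw [div_le_iff₀ (by positivity)]
    linarith

theorem stmt5 (d : ℕ) (lam : ℕ → ℤ)
    (hlam : ∃ i ≤ d, lam i ≠ 0)
    (A : Set ℕ) (hA : A.Infinite) :
    limsup (fun n : ℕ =>
        ((|∑ i ∈ Finset.range (d + 1), (lam i : ℝ) * Rz A ((n : ℤ) - i)| : ℝ) : EReal)) atTop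
      ≥ limsup (fun n : ℕ =>
        ((|((∑ i ∈ Finset.range (d + 1), lam i : ℤ) : ℝ)| / (2 * (d + 1) ^ 2) *
          ((Bf A lam d n : ℝ) / Real.sqrt n) ^ 2 : ℝ) : EReal)) atTop :=
  stmt5_general d lam A
end

section
/- Let d ≥ 0 and let λ_0,...,λ_d be integers with Σ_{i=0}^d λ_i = 0, not all zero. For every sufficiently large positive integer M, there exists a set C ⊆ [0, M(d+1)-1] such that |R_C(n) - R_C(n-1)| ≤ 12·√(M(d+1)·log(M(d+1))) for every nonnegative integer n, and B(C,λ,M(d+1)-1) ≥ M/2^{d+2}. -/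
open Filter Finset
open scoped Classical

/-!
Take `C ⊆ [0, N)`, `N = M(d+1)`, uniformly at random: `ω : Fin N → Bool` is the indicator of `C`,
`𝔼` is the uniform average, and functions of `ω` that depend (`DependsOn`) on disjoint sets of
coordinates are independent, so Hoeffding's inequality applies to sums of them.

Counting ordered pairs, `R_C(n) = 2 S_n + D_n` with `D_n ∈ [0, 1]` (the pair `a = n - a`) and
`S_n` a sum of `K_n` products `1_C(a) 1_C(b)` over the disjoint pairs `a < b < N`, `a + b = n`.
Hoeffding bounds `|S_n - K_n / 4| < 2 √(N log N)` for all `n < 2N` outside an event of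
probability `4 / N`, and `K_n` moves by at most one with `n`, so
`|R_C(n) - R_C(n-1)| ≤ 8 √(N log N) + 3/2`.

For `B`, cut `[0, N)` into `M` blocks of length `d + 1`. Whether the last element `m` of block `k`
is counted depends only on `C` ∩ block `k`, and it is counted with probability at least
`2^{-(d+1)}`: it is if `C` meets the block exactly in `m - i₀`, where `λ_{i₀} ≠ 0`. Hoeffding over
the independent blocks makes fewer than `M / 2^{d+2}` counted blocks an event of probability at most
`e^{-2}` once `M ≥ 4^{d+3}`. The two bad events cannot cover the whole cube.
-/

open scoped BigOperators
open Real

section BooleanCube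

variable {α : Type*} [Fintype α] [DecidableEq α]

lemma expect_comp_piecewise (s : Set α) (F : (α → Bool) → ℝ) :
    𝔼 x, 𝔼 y, F (s.piecewise x y) = 𝔼 ω, F ω := by
  let σ : Function.Involutive fun p : (α → Bool) × (α → Bool) =>
      (s.piecewise p.1 p.2, s.piecewise p.2 p.1) := fun p => by
    ext i <;> by_cases hi : i ∈ s <;> simp [Set.piecewise, hi]
  calc 𝔼 x, 𝔼 y, F (s.piecewise x y)
      = 𝔼 p : (α → Bool) × (α → Bool), F (s.piecewise p.1 p.2) :=
        (Finset.expect_product' _ _ fun x y => F (s.piecewise x y)).symm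
    _ = 𝔼 p : (α → Bool) × (α → Bool), F p.1 :=
        (Fintype.expect_equiv σ.toPerm _ _ fun p => congrArg (fun q => F q.1) (σ p).symm).symm
    _ = 𝔼 ω, F ω := by
        rw [← Finset.univ_product_univ, Finset.expect_product' univ univ fun x _ => F x]
        simp

lemma expect_mul_of_dependsOn {f g : (α → Bool) → ℝ} {s t : Set α}
    (hf : DependsOn f s) (hg : DependsOn g t) (hst : Disjoint s t) :
    𝔼 ω, f ω * g ω = (𝔼 ω, f ω) * 𝔼 ω, g ω := by
  rw [← expect_comp_piecewise s, Fintype.expect_mul_expect]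
  refine Finset.expect_congr rfl fun x _ => Finset.expect_congr rfl fun y _ => ?_
  rw [hf fun i hi => Set.piecewise_eq_of_mem _ _ _ hi,
    hg fun i hi => Set.piecewise_eq_of_notMem _ _ _ (Set.disjoint_right.mp hst hi)]

lemma expect_prod_of_dependsOn {ι : Type*} {A : Finset ι} {f : ι → (α → Bool) → ℝ}
    {s : ι → Set α} (hf : ∀ i ∈ A, DependsOn (f i) (s i))
    (hs : (A : Set ι).PairwiseDisjoint s) :
    𝔼 ω, ∏ i ∈ A, f i ω = ∏ i ∈ A, 𝔼 ω, f i ω := by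
  induction A using Finset.induction_on with
  | empty => simp
  | @insert j A hj ih =>
    rw [Finset.coe_insert, Set.pairwiseDisjoint_insert] at hs
    have hprod : DependsOn (fun ω => ∏ i ∈ A, f i ω) (⋃ i ∈ A, s i) := fun ω ω' h =>
      Finset.prod_congr rfl fun i hi =>
        hf i (Finset.mem_insert_of_mem hi) fun a ha => h a (Set.mem_biUnion hi ha)
    have hdisj : Disjoint (s j) (⋃ i ∈ A, s i) :=
      Set.disjoint_iUnion₂_right.mpr fun i hi => hs.2 i hi fun h => hj (h ▸ hi)
    simp_rw [Finset.prod_insert hj]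
    rw [expect_mul_of_dependsOn (hf j (Finset.mem_insert_self j A)) hprod hdisj,
      ih (fun i hi => hf i (Finset.mem_insert_of_mem hi)) hs.1]

lemma expect_boole_apply (a : α) :
    𝔼 ω : α → Bool, (if ω a then (1 : ℝ) else 0) = 1 / 2 := by
  let flip : Function.Involutive fun ω : α → Bool => Function.update ω a (!ω a) := fun ω => by
    simp
  have hsymm : 𝔼 ω : α → Bool, (if ω a then (1 : ℝ) else 0)
      = 𝔼 ω : α → Bool, (if ω a then (0 : ℝ) else 1) :=
    Fintype.expect_equiv flip.toPerm _ _ fun ω => by cases h : ω a <;> simp [h]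
  have hsum : 𝔼 ω : α → Bool, ((if ω a then (1 : ℝ) else 0) + (if ω a then 0 else 1)) = 1 := by
    rw [Finset.expect_congr rfl fun ω _ => show _ = (1 : ℝ) by cases ω a <;> norm_num,
      Fintype.expect_one]
  rw [Finset.expect_add_distrib, ← hsymm] at hsum
  linarith

end BooleanCube

section Hoeffding

lemma expect_exp_mul_le {Ω : Type*} [Fintype Ω] [Nonempty Ω] {f : Ω → ℝ}
    (hmean : 𝔼 ω, f ω = 0) (hf : ∀ ω, |f ω| ≤ 1) (r : ℝ) :
    𝔼 ω, exp (r * f ω) ≤ exp (r ^ 2 / 2) :=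
  calc 𝔼 ω, exp (r * f ω)
      ≤ 𝔼 ω, (cosh r + f ω * sinh r) := Finset.expect_le_expect fun ω _ => by
        rw [mul_comm]; exact exp_mul_le_cosh_add_mul_sinh (hf ω) r
    _ = cosh r := by
        rw [Finset.expect_add_distrib, ← Finset.expect_mul, hmean, Fintype.expect_const]
        ring
    _ ≤ exp (r ^ 2 / 2) := cosh_le_exp_half_sq r

lemma card_filter_le_le_exp_mul_sum {Ω : Type*} [Fintype Ω] (X : Ω → ℝ) (t : ℝ) {r : ℝ}
    (hr : 0 ≤ r) :
    (#{ω | t ≤ X ω} : ℝ) ≤ exp (-(r * t)) * ∑ ω, exp (r * X ω) := by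
  rw [exp_neg, ← div_eq_inv_mul, le_div_iff₀ (exp_pos _)]
  calc (#{ω | t ≤ X ω} : ℝ) * exp (r * t) = ∑ ω with t ≤ X ω, exp (r * t) := by
        rw [Finset.sum_const, nsmul_eq_mul]
    _ ≤ ∑ ω with t ≤ X ω, exp (r * X ω) := Finset.sum_le_sum fun ω hω =>
        exp_le_exp.mpr (mul_le_mul_of_nonneg_left (Finset.mem_filter.mp hω).2 hr)
    _ ≤ ∑ ω, exp (r * X ω) :=
        Finset.sum_le_sum_of_subset_of_nonneg (Finset.filter_subset _ _)
          fun ω _ _ => (exp_pos _).le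

variable {α ι : Type*} [Fintype α] [DecidableEq α] {A : Finset ι} {V : ι → (α → Bool) → ℝ}
  {s : ι → Set α}

theorem card_le_sum_le_exp (hV : ∀ i ∈ A, DependsOn (V i) (s i))
    (hs : (A : Set ι).PairwiseDisjoint s) (hmean : ∀ i ∈ A, 𝔼 ω, V i ω = 0)
    (hbound : ∀ i ∈ A, ∀ ω, |V i ω| ≤ 1) {t n : ℝ} (ht : 0 ≤ t) (hn : 0 < n)
    (hA : #A ≤ n) :
    (#{ω | t ≤ ∑ i ∈ A, V i ω} : ℝ) ≤ Fintype.card (α → Bool) * exp (-(t ^ 2 / (2 * n))) := by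
  set r := t / n
  have hr : 0 ≤ r := div_nonneg ht hn.le
  have hmgf : 𝔼 ω, exp (r * ∑ i ∈ A, V i ω) ≤ exp (r ^ 2 * n / 2) :=
    calc 𝔼 ω, exp (r * ∑ i ∈ A, V i ω) = ∏ i ∈ A, 𝔼 ω, exp (r * V i ω) := by
          simp_rw [Finset.mul_sum, exp_sum]
          exact expect_prod_of_dependsOn (fun i hi ω ω' h => by rw [hV i hi h]) hs
      _ ≤ ∏ _i ∈ A, exp (r ^ 2 / 2) := Finset.prod_le_prod
          (fun i _ => Finset.expect_nonneg fun ω _ => (exp_pos _).le)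
          fun i hi => expect_exp_mul_le (hmean i hi) (hbound i hi) r
      _ ≤ exp (r ^ 2 * n / 2) := by
          rw [Finset.prod_const, ← exp_nat_mul]
          gcongr
          nlinarith [sq_nonneg r]
  calc (#{ω | t ≤ ∑ i ∈ A, V i ω} : ℝ)
      ≤ exp (-(r * t)) * ∑ ω, exp (r * ∑ i ∈ A, V i ω) :=
        card_filter_le_le_exp_mul_sum _ t hr
    _ = Fintype.card (α → Bool) * (exp (-(r * t)) * 𝔼 ω, exp (r * ∑ i ∈ A, V i ω)) := by
        rw [← Fintype.card_mul_expect]; ring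
    _ ≤ Fintype.card (α → Bool) * (exp (-(r * t)) * exp (r ^ 2 * n / 2)) := by gcongr
    _ = Fintype.card (α → Bool) * exp (-(t ^ 2 / (2 * n))) := by
        rw [← exp_add]
        congr 2
        simp only [r]
        field_simp
        ring

theorem card_le_abs_sum_le_exp (hV : ∀ i ∈ A, DependsOn (V i) (s i))
    (hs : (A : Set ι).PairwiseDisjoint s) (hmean : ∀ i ∈ A, 𝔼 ω, V i ω = 0)
    (hbound : ∀ i ∈ A, ∀ ω, |V i ω| ≤ 1) {t n : ℝ} (ht : 0 ≤ t) (hn : 0 < n)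
    (hA : #A ≤ n) :
    (#{ω | t ≤ |∑ i ∈ A, V i ω|} : ℝ)
      ≤ 2 * Fintype.card (α → Bool) * exp (-(t ^ 2 / (2 * n))) := by
  have hneg := card_le_sum_le_exp (V := fun i ω => -V i ω)
    (fun i hi ω ω' h => congrArg Neg.neg (hV i hi h)) hs
    (fun i hi => by rw [Finset.expect_neg_distrib, hmean i hi, neg_zero])
    (fun i hi ω => by rw [abs_neg]; exact hbound i hi ω) ht hn hA
  simp_rw [Finset.sum_neg_distrib] at hneg
  have hunion : (#{ω | t ≤ |∑ i ∈ A, V i ω|} : ℝ)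
      ≤ #{ω | t ≤ ∑ i ∈ A, V i ω} + #{ω | t ≤ -∑ i ∈ A, V i ω} := by
    simp_rw [le_abs, Finset.filter_or]
    exact_mod_cast Finset.card_union_le _ _
  linarith [card_le_sum_le_exp hV hs hmean hbound ht hn hA]

end Hoeffding

lemma Rf_eq_sum_indicator (C : Set ℕ) (n : ℕ) :
    (Rf C n : ℝ) = ∑ p ∈ antidiagonal n, C.indicator 1 p.1 * C.indicator 1 p.2 := by
  have hset : {p : ℕ × ℕ | p.1 ∈ C ∧ p.2 ∈ C ∧ p.1 + p.2 = n}
      = ↑((antidiagonal n).filter fun p => p.1 ∈ C ∧ p.2 ∈ C) := by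
    ext p
    simp only [Set.mem_ofPred_eq, coe_filter, HasAntidiagonal.mem_antidiagonal]
    tauto
  rw [Rf, hset, Nat.card_coe_set_eq, Set.ncard_coe_finset, Finset.natCast_card_filter]
  refine Finset.sum_congr rfl fun p _ => ?_
  by_cases h1 : p.1 ∈ C <;> by_cases h2 : p.2 ∈ C <;> simp [h1, h2]

lemma sum_antidiagonal_eq_two_mul_add {f : ℕ × ℕ → ℝ} (hf : ∀ p, f p.swap = f p) (n : ℕ) :
    ∑ p ∈ antidiagonal n, f p
      = 2 * ∑ p ∈ antidiagonal n with p.1 < p.2, f p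
        + ∑ p ∈ antidiagonal n with p.1 = p.2, f p := by
  have hsplit : ∀ p : ℕ × ℕ, f p = (if p.1 < p.2 then f p else 0)
      + (if p.2 < p.1 then f p else 0) + (if p.1 = p.2 then f p else 0) := fun p => by
    rcases lt_trichotomy p.1 p.2 with h | h | h
    · simp [h, h.ne, h.not_gt]
    · simp [h]
    · simp [h, h.ne', h.not_gt]
  have hswap : ∑ p ∈ antidiagonal n, (if p.2 < p.1 then f p else 0)
      = ∑ p ∈ antidiagonal n, (if p.1 < p.2 then f p else 0) := by
    rw [← Finset.Nat.sum_antidiagonal_swap]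
    simp only [Prod.fst_swap, Prod.snd_swap, hf]
  rw [Finset.sum_congr rfl fun p _ => hsplit p, Finset.sum_add_distrib, Finset.sum_add_distrib,
    hswap, Finset.sum_filter, Finset.sum_filter]
  ring

lemma chi_natCast (C : Set ℕ) (a : ℕ) : chi C a = if a ∈ C then 1 else 0 := by
  simp [chi]

lemma card_filter_blockSum_ne_zero_le_Bf (C : Set ℕ) (lam : ℕ → ℤ) (d M : ℕ) :
    #{k ∈ range M | ∑ i ∈ range (d + 1), lam i * chi C ((k * (d + 1) + d : ℕ) - i) ≠ 0}
      ≤ Bf C lam d (M * (d + 1) - 1) := by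
  rw [Bf, Nat.card_coe_set_eq, ← Set.ncard_coe_finset]
  refine Set.ncard_le_ncard_of_injOn (fun k => k * (d + 1) + d) (fun k hk => ?_)
    (fun k _ k' _ h => ?_) ((Set.finite_Iic _).subset fun m hm => hm.1)
  · simp only [coe_filter, mem_range, Set.mem_ofPred_eq] at hk
    refine ⟨?_, hk.2⟩
    have := Nat.mul_le_mul_right (d + 1) hk.1
    rw [Nat.succ_mul] at this
    omega
  · exact Nat.eq_of_mul_eq_mul_right (Nat.succ_pos d) (by simpa using h)

lemma mul_succ_add_sub_div_succ {k d i : ℕ} (hi : i ≤ d) : (k * (d + 1) + d - i) / (d + 1) = k := by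
  rw [Nat.add_sub_assoc hi, Nat.add_comm, Nat.add_mul_div_right _ _ (Nat.succ_pos d),
    Nat.div_eq_of_lt (by omega), zero_add]

lemma one_le_sqrt_mul_log {N : ℕ} (hN : 8 ≤ N) : 1 ≤ √(N * log N) := by
  have hN' : (8 : ℝ) ≤ N := by exact_mod_cast hN
  have hlog : 1 < log N := (lt_log_iff_exp_lt (by positivity)).mpr
    (exp_one_lt_d9.trans_le (by linarith))
  exact one_le_sqrt.mpr (by nlinarith)

lemma exp_neg_sq_div_lt_half_of_four_pow_le {d M : ℕ} (hM : 4 ^ (d + 3) ≤ M) :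
    exp (-((M * (1 / 2 : ℝ) ^ (d + 1) / 2) ^ 2 / (2 * M))) < 1 / 2 := by
  have hM' : (4 : ℝ) ^ (d + 3) ≤ M := by exact_mod_cast hM
  have hMpos : (0 : ℝ) < M := lt_of_lt_of_le (by positivity) hM'
  set p : ℝ := (1 / 2) ^ (d + 1)
  have hsq : (4 : ℝ) ^ (d + 3) * p ^ 2 = 16 := by
    rw [show (4 : ℝ) ^ (d + 3) = 16 * 4 ^ (d + 1) by ring, ← pow_mul, mul_comm (d + 1), pow_mul,
      mul_assoc, ← mul_pow]
    norm_num
  have hMp : 16 ≤ M * p ^ 2 := by nlinarith [sq_nonneg p]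
  have harg : -((M * p / 2) ^ 2 / (2 * M)) ≤ -2 := by
    rw [neg_le_neg_iff, le_div_iff₀ (by positivity)]
    nlinarith [mul_le_mul_of_nonneg_left hMp hMpos.le]
  calc exp (-((M * p / 2) ^ 2 / (2 * M))) ≤ exp (-2) := exp_le_exp.mpr harg
    _ < 1 / 2 := by
        have h2 : (2 : ℝ) < exp 2 := by linarith [add_one_lt_exp (show (2 : ℝ) ≠ 0 by norm_num)]
        rw [exp_neg, one_div]
        exact inv_strictAnti₀ (by norm_num) h2

namespace RandomSubset

variable {N : ℕ}

def toSet (ω : Fin N → Bool) : Set ℕ := {a | ∃ h : a < N, ω ⟨a, h⟩ = true}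

noncomputable def ind (ω : Fin N → Bool) (a : ℕ) : ℝ := (toSet ω).indicator 1 a

lemma toSet_subset (ω : Fin N → Bool) : toSet ω ⊆ Set.Icc 0 (N - 1) :=
  fun _ ⟨h, _⟩ => ⟨Nat.zero_le _, by omega⟩

lemma dependsOn_mem_toSet (a : ℕ) :
    DependsOn (fun ω : Fin N → Bool => a ∈ toSet ω) (Fin.val ⁻¹' {a}) := fun ω ω' h => by
  show (∃ ha : a < N, ω ⟨a, ha⟩ = true) = ∃ ha : a < N, ω' ⟨a, ha⟩ = true
  exact propext <| exists_congr fun ha => by rw [h ⟨a, ha⟩ rfl]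

lemma ind_apply (ω : Fin N → Bool) (a : ℕ) : ind ω a = if a ∈ toSet ω then 1 else 0 := by
  simp [ind, Set.indicator_apply]

lemma dependsOn_ind (a : ℕ) :
    DependsOn (fun ω : Fin N → Bool => ind ω a) (Fin.val ⁻¹' {a}) := fun ω ω' h => by
  simp only [ind, Set.indicator_apply, dependsOn_mem_toSet a h]

lemma ind_nonneg (ω : Fin N → Bool) (a : ℕ) : 0 ≤ ind ω a :=
  Set.indicator_nonneg (fun _ _ => zero_le_one) a

lemma ind_le_one (ω : Fin N → Bool) (a : ℕ) : ind ω a ≤ 1 :=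
  Set.indicator_le_self' (fun _ _ => zero_le_one) a

lemma ind_eq_zero_of_le {ω : Fin N → Bool} {a : ℕ} (ha : N ≤ a) : ind ω a = 0 :=
  Set.indicator_of_notMem (fun hmem => by obtain ⟨h, _⟩ := hmem; omega) _

lemma expect_ind {a : ℕ} (ha : a < N) : 𝔼 ω : Fin N → Bool, ind ω a = 1 / 2 := by
  rw [← expect_boole_apply (⟨a, ha⟩ : Fin N)]
  refine Finset.expect_congr rfl fun ω _ => ?_
  simp [ind, Set.indicator_apply, toSet, ha]

def pairs (N n : ℕ) : Finset (ℕ × ℕ) := (antidiagonal n).filter fun p => p.1 < p.2 ∧ p.2 < N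

noncomputable def pairSum (n : ℕ) (ω : Fin N → Bool) : ℝ :=
  ∑ p ∈ pairs N n, ind ω p.1 * ind ω p.2

noncomputable def diagSum (n : ℕ) (ω : Fin N → Bool) : ℝ :=
  ∑ p ∈ antidiagonal n with p.1 = p.2, ind ω p.1 * ind ω p.2

lemma mem_pairs {n : ℕ} {p : ℕ × ℕ} : p ∈ pairs N n ↔ p.1 + p.2 = n ∧ p.1 < p.2 ∧ p.2 < N := by
  simp [pairs]

lemma card_pairs (N n : ℕ) : #(pairs N n) = min n (N - 1) - n / 2 := by
  rw [← Nat.card_Ioc]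
  refine Finset.card_bij (fun p _ => p.2) (fun p hp => ?_) (fun p hp q hq hpq => ?_)
    fun b hb => ⟨(n - b, b), ?_, rfl⟩
  · rw [mem_pairs] at hp
    rw [Finset.mem_Ioc]
    omega
  · rw [mem_pairs] at hp hq
    exact Prod.ext (by omega) hpq
  · rw [Finset.mem_Ioc] at hb
    rw [mem_pairs]
    omega

lemma Rf_toSet (ω : Fin N → Bool) (n : ℕ) :
    (Rf (toSet ω) n : ℝ) = 2 * pairSum n ω + diagSum n ω := by
  have hpairs : pairSum n ω = ∑ p ∈ antidiagonal n with p.1 < p.2, ind ω p.1 * ind ω p.2 := by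
    rw [pairSum, pairs, ← Finset.filter_filter, Finset.sum_filter_of_ne fun p _ h => ?_]
    by_contra hp
    exact h (by rw [ind_eq_zero_of_le (a := p.2) (by omega), mul_zero])
  rw [Rf_eq_sum_indicator, hpairs, diagSum]
  exact sum_antidiagonal_eq_two_mul_add (fun p => mul_comm _ _) n

lemma diagSum_mem_Icc (n : ℕ) (ω : Fin N → Bool) : diagSum n ω ∈ Set.Icc 0 1 := by
  have hcard : #{p ∈ antidiagonal n | p.1 = p.2} ≤ 1 :=
    Finset.card_le_one.mpr fun p hp q hq => by
      simp only [Finset.mem_filter, HasAntidiagonal.mem_antidiagonal] at hp hq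
      exact Prod.ext (by omega) (by omega)
  refine ⟨Finset.sum_nonneg fun p _ => mul_nonneg (ind_nonneg ω _) (ind_nonneg ω _), ?_⟩
  calc diagSum n ω ≤ ∑ p ∈ antidiagonal n with p.1 = p.2, (1 : ℝ) :=
        Finset.sum_le_sum fun p _ => mul_le_one₀ (ind_le_one ω _) (ind_nonneg ω _) (ind_le_one ω _)
    _ ≤ 1 := by rw [Finset.sum_const, nsmul_one]; exact_mod_cast hcard

lemma abs_Rf_sub_Rz_le {ω : Fin N → Bool} {t : ℝ} (ht : 0 ≤ t)
    (hdev : ∀ n < 2 * N, |pairSum n ω - #(pairs N n) / 4| ≤ t) (n : ℕ) :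
    |(Rf (toSet ω) n : ℝ) - Rz (toSet ω) (n - 1)| ≤ 4 * t + 3 / 2 := by
  have hdev' : ∀ n, |pairSum n ω - #(pairs N n) / 4| ≤ t := fun n => by
    rcases lt_or_ge n (2 * N) with hn | hn
    · exact hdev n hn
    · have hempty : pairs N n = ∅ := Finset.card_eq_zero.mp (by rw [card_pairs]; omega)
      simpa [pairSum, hempty] using ht
  have hD := fun n => diagSum_mem_Icc n ω
  cases n with
  | zero =>
    have hempty : pairs N 0 = ∅ := Finset.card_eq_zero.mp (by rw [card_pairs]; simp)
    obtain ⟨hD0, hD1⟩ := hD 0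
    rw [Rf_toSet, pairSum, hempty, Rz, if_neg (by norm_num), Finset.sum_empty, abs_le]
    constructor <;> push_cast <;> linarith
  | succ n =>
    have hRz : Rz (toSet ω) ((n + 1 : ℕ) - 1 : ℤ) = Rf (toSet ω) n := by
      rw [Rz, if_pos (by omega)]
      congr
      omega
    have hK : |(#(pairs N (n + 1)) : ℝ) - #(pairs N n)| ≤ 1 := by
      have hup : #(pairs N (n + 1)) ≤ #(pairs N n) + 1 := by rw [card_pairs, card_pairs]; omega
      have hdown : #(pairs N n) ≤ #(pairs N (n + 1)) + 1 := by rw [card_pairs, card_pairs]; omega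
      have hup' : (#(pairs N (n + 1)) : ℝ) ≤ #(pairs N n) + 1 := by exact_mod_cast hup
      have hdown' : (#(pairs N n) : ℝ) ≤ #(pairs N (n + 1)) + 1 := by exact_mod_cast hdown
      rw [abs_le]
      constructor <;> linarith
    rw [hRz, Rf_toSet, Rf_toSet]
    have h1 := abs_le.mp (hdev' (n + 1))
    have h2 := abs_le.mp (hdev' n)
    have h3 := abs_le.mp hK
    rw [abs_le]
    obtain ⟨hDn0, hDn1⟩ := hD n
    obtain ⟨hDs0, hDs1⟩ := hD (n + 1)
    constructor <;> linarith

lemma pairs_pairwiseDisjoint (n : ℕ) :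
    (pairs N n : Set (ℕ × ℕ)).PairwiseDisjoint fun p => (Fin.val ⁻¹' {p.1, p.2} : Set (Fin N)) := by
  intro p hp q hq hpq
  rw [Finset.mem_coe, mem_pairs] at hp hq
  refine Disjoint.preimage _ (Set.disjoint_left.mpr fun a ha hb => hpq ?_)
  simp only [Set.mem_insert_iff, Set.mem_singleton_iff] at ha hb
  exact Prod.ext (by omega) (by omega)

lemma card_le_abs_pairSum_sub_le (n : ℕ) {t : ℝ} (ht : 0 ≤ t) (hN : 0 < N) :
    (#{ω : Fin N → Bool | t ≤ |pairSum n ω - #(pairs N n) / 4|} : ℝ)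
      ≤ 2 * Fintype.card (Fin N → Bool) * exp (-(t ^ 2 / (2 * N))) := by
  have hcentered : ∀ ω : Fin N → Bool, pairSum n ω - #(pairs N n) / 4
      = ∑ p ∈ pairs N n, (ind ω p.1 * ind ω p.2 - 1 / 4) := fun ω => by
    rw [Finset.sum_sub_distrib, Finset.sum_const, nsmul_eq_mul, pairSum]
    ring
  simp_rw [hcentered]
  refine card_le_abs_sum_le_exp (s := fun p : ℕ × ℕ => (Fin.val ⁻¹' {p.1, p.2} : Set (Fin N)))
    (fun p _ ω ω' h => ?_) (pairs_pairwiseDisjoint n) (fun p hp => ?_) (fun p _ ω => ?_) ht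
    (n := N) (by exact_mod_cast hN) ?_
  · have h1 : ind ω p.1 = ind ω' p.1 :=
      dependsOn_ind p.1 fun i hi => h i (Set.preimage_mono (by simp) hi)
    have h2 : ind ω p.2 = ind ω' p.2 :=
      dependsOn_ind p.2 fun i hi => h i (Set.preimage_mono (by simp) hi)
    simp only [h1, h2]
  · rw [mem_pairs] at hp
    have hdisj : Disjoint (Fin.val ⁻¹' {p.1} : Set (Fin N)) (Fin.val ⁻¹' {p.2}) :=
      Disjoint.preimage _ (Set.disjoint_singleton.mpr (by omega))
    rw [Finset.expect_sub_distrib, expect_mul_of_dependsOn (dependsOn_ind _) (dependsOn_ind _)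
      hdisj, expect_ind (by omega), expect_ind hp.2.2, Fintype.expect_const]
    norm_num
  · have h1 := ind_nonneg ω p.1
    have h2 := ind_nonneg ω p.2
    have h3 := ind_le_one ω p.1
    have h4 := ind_le_one ω p.2
    rw [abs_le]
    constructor <;> nlinarith
  · rw [card_pairs]
    exact_mod_cast (Nat.sub_le _ _).trans ((min_le_right _ _).trans (Nat.sub_le _ _))

lemma card_exists_le_abs_pairSum_sub_le_card_div_two (hN : 8 ≤ N) :
    (#{ω : Fin N → Bool | ∃ n < 2 * N, 2 * √(N * log N) ≤ |pairSum n ω - #(pairs N n) / 4|} : ℝ)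
      ≤ Fintype.card (Fin N → Bool) / 2 := by
  have hN' : (8 : ℝ) ≤ N := by exact_mod_cast hN
  have hlog : 0 ≤ (N : ℝ) * log N := mul_nonneg (by linarith) (log_nonneg (by linarith))
  have hexp : exp (-((2 * √(N * log N)) ^ 2 / (2 * N))) = 1 / (N : ℝ) ^ 2 := by
    rw [mul_pow, sq_sqrt hlog, show 2 ^ 2 * (N * log N) / (2 * N) = log ((N : ℝ) ^ 2) by
      rw [log_pow]; field_simp; ring, exp_neg, exp_log (by positivity), one_div]
  have hunion : ({ω : Fin N → Bool | ∃ n < 2 * N,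
        2 * √(N * log N) ≤ |pairSum n ω - #(pairs N n) / 4|} : Finset _)
      = (range (2 * N)).biUnion fun n =>
        {ω | 2 * √(N * log N) ≤ |pairSum n ω - #(pairs N n) / 4|} := by
    ext ω
    simp
  calc (#{ω : Fin N → Bool | ∃ n < 2 * N, 2 * √(N * log N) ≤ |pairSum n ω - #(pairs N n) / 4|} : ℝ)
      ≤ ∑ n ∈ range (2 * N),
          (#{ω : Fin N → Bool | 2 * √(N * log N) ≤ |pairSum n ω - #(pairs N n) / 4|} : ℝ) := by
        rw [hunion]; exact_mod_cast Finset.card_biUnion_le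
    _ ≤ ∑ n ∈ range (2 * N), 2 * Fintype.card (Fin N → Bool) * (1 / (N : ℝ) ^ 2) :=
        Finset.sum_le_sum fun n _ => hexp ▸ card_le_abs_pairSum_sub_le n (by positivity) (by omega)
    _ = Fintype.card (Fin N → Bool) * (4 / N) := by
        rw [Finset.sum_const, Finset.card_range, nsmul_eq_mul]
        push_cast
        field_simp
        ring
    _ ≤ Fintype.card (Fin N → Bool) * (1 / 2) :=
        mul_le_mul_of_nonneg_left (by rw [div_le_iff₀ (by linarith)]; linarith) (Nat.cast_nonneg _)
    _ = Fintype.card (Fin N → Bool) / 2 := by ring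

lemma card_exists_abs_Rf_sub_Rz_gt_le_card_div_two (hN : 8 ≤ N) :
    (#{ω : Fin N → Bool | ∃ n : ℕ,
        12 * √(N * log N) < |(Rf (toSet ω) n : ℝ) - Rz (toSet ω) (n - 1)|} : ℝ)
      ≤ Fintype.card (Fin N → Bool) / 2 := by
  refine le_trans (Nat.cast_le.mpr (Finset.card_le_card fun ω => ?_))
    (card_exists_le_abs_pairSum_sub_le_card_div_two hN)
  simp only [Finset.mem_filter, Finset.mem_univ, true_and]
  contrapose!
  intro hdev n
  have h1 := one_le_sqrt_mul_log hN
  linarith [abs_Rf_sub_Rz_le (by positivity) (fun n hn => (hdev n hn).le) n]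

lemma chi_toSet_sub (ω : Fin N → Bool) {m i : ℕ} (hi : i ≤ m) :
    chi (toSet ω) ((m : ℤ) - i) = if m - i ∈ toSet ω then 1 else 0 := by
  rw [← Nat.cast_sub hi, chi_natCast]

-- Whether `Bf` counts `k (d + 1) + d`, the last element of the `k`-th block of length `d + 1`.
noncomputable def blockHit (lam : ℕ → ℤ) (d k : ℕ) (ω : Fin N → Bool) : ℝ :=
  if ∑ i ∈ range (d + 1), lam i * chi (toSet ω) ((k * (d + 1) + d : ℕ) - i) ≠ 0 then 1 else 0

lemma sum_blockHit_le_Bf (lam : ℕ → ℤ) (d M : ℕ) (ω : Fin N → Bool) :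
    ∑ k ∈ range M, blockHit lam d k ω ≤ Bf (toSet ω) lam d (M * (d + 1) - 1) := by
  simp only [blockHit, Finset.sum_boole]
  exact_mod_cast card_filter_blockSum_ne_zero_le_Bf _ lam d M

lemma dependsOn_blockHit (lam : ℕ → ℤ) (d k : ℕ) :
    DependsOn (blockHit (N := N) lam d k) {j | (j : ℕ) / (d + 1) = k} := fun ω ω' h => by
  have hchi : ∀ i ∈ range (d + 1), chi (toSet ω) ((k * (d + 1) + d : ℕ) - i)
      = chi (toSet ω') ((k * (d + 1) + d : ℕ) - i) := fun i hi => by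
    have hi : i ≤ d := Nat.lt_succ_iff.mp (mem_range.mp hi)
    have hmem : (k * (d + 1) + d - i ∈ toSet ω) = (k * (d + 1) + d - i ∈ toSet ω') :=
      dependsOn_mem_toSet (k * (d + 1) + d - i) fun j hj => h j <| by
        rw [Set.mem_ofPred_eq, Set.mem_singleton_iff.mp hj]
        exact mul_succ_add_sub_div_succ hi
    rw [chi_toSet_sub _ (by omega), chi_toSet_sub _ (by omega), hmem]
  simp only [blockHit, Finset.sum_congr rfl fun i hi => congrArg (lam i * ·) (hchi i hi)]

lemma expect_ite_mem_toSet_iff {a : ℕ} (ha : a < N) (P : Prop) [Decidable P] :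
    𝔼 ω : Fin N → Bool, (if (a ∈ toSet ω ↔ P) then 1 else 0 : ℝ) = 1 / 2 := by
  by_cases hP : P
  · rw [← expect_ind ha]
    exact Finset.expect_congr rfl fun ω _ => by simp [hP, ind_apply]
  · rw [show (1 / 2 : ℝ) = 1 - 1 / 2 by norm_num, ← expect_ind ha,
      ← Fintype.expect_const (ι := Fin N → Bool) (1 : ℝ), ← Finset.expect_sub_distrib]
    exact Finset.expect_congr rfl fun ω _ => by
      by_cases hm : a ∈ toSet ω <;> simp [hP, hm, ind_apply]

-- The product is the indicator of `C ∩ [k (d + 1), k (d + 1) + d] = {k (d + 1) + d - i₀}`,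
-- on which the sum defining `blockHit` is `lam i₀ ≠ 0`.
lemma prod_ite_mem_toSet_iff_le_blockHit {lam : ℕ → ℤ} {d k i₀ : ℕ} (hi₀ : i₀ ≤ d)
    (hlam : lam i₀ ≠ 0) (ω : Fin N → Bool) :
    ∏ i ∈ range (d + 1), (if (k * (d + 1) + d - i ∈ toSet ω ↔ i = i₀) then 1 else 0 : ℝ)
      ≤ blockHit lam d k ω := by
  by_cases hhit : blockHit lam d k ω = 1
  · rw [hhit]
    exact Finset.prod_le_one (fun i _ => by positivity) fun i _ => by split_ifs <;> norm_num
  refine (Finset.prod_eq_zero_iff.mpr ?_).le.trans (by unfold blockHit; positivity)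
  by_contra! hpattern
  apply hhit
  have hterm : ∀ i ∈ range (d + 1), lam i * chi (toSet ω) ((k * (d + 1) + d : ℕ) - i)
      = if i = i₀ then lam i else 0 := fun i hi => by
    have hi' : i ≤ k * (d + 1) + d := by have := mem_range.mp hi; omega
    have := hpattern i hi
    simp only [ne_eq, ite_eq_right_iff, one_ne_zero, imp_false, not_not] at this
    rw [chi_toSet_sub _ hi']
    by_cases h : i = i₀ <;> simp_all
  rw [blockHit, if_pos]
  rwa [Finset.sum_congr rfl hterm, Finset.sum_ite_eq', if_pos (mem_range.mpr (by omega))]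

lemma expect_blockHit_ge {lam : ℕ → ℤ} {d k i₀ : ℕ} (hi₀ : i₀ ≤ d) (hlam : lam i₀ ≠ 0)
    (hk : k * (d + 1) + d < N) :
    (1 / 2) ^ (d + 1) ≤ 𝔼 ω : Fin N → Bool, blockHit lam d k ω := by
  set m := k * (d + 1) + d
  calc (1 / 2 : ℝ) ^ (d + 1)
      = ∏ i ∈ range (d + 1), 𝔼 ω : Fin N → Bool, (if (m - i ∈ toSet ω ↔ i = i₀) then 1 else 0) := by
        rw [Finset.prod_congr rfl fun i _ => expect_ite_mem_toSet_iff (by omega) _,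
          Finset.prod_const, card_range]
    _ = 𝔼 ω, ∏ i ∈ range (d + 1), (if (m - i ∈ toSet ω ↔ i = i₀) then 1 else 0) := by
        refine (expect_prod_of_dependsOn (s := fun i => (Fin.val ⁻¹' {m - i} : Set (Fin N)))
          (fun i _ ω ω' h => ?_) fun i hi i' hi' hii' => ?_).symm
        · have hmem : (m - i ∈ toSet ω) = (m - i ∈ toSet ω') := dependsOn_mem_toSet (m - i) h
          simp only [hmem]
        · refine Disjoint.preimage _ (Set.disjoint_singleton.mpr ?_)
          have := mem_range.mp hi
          have := mem_range.mp hi'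
          omega
    _ ≤ 𝔼 ω, blockHit lam d k ω :=
        Finset.expect_le_expect fun ω _ => prod_ite_mem_toSet_iff_le_blockHit hi₀ hlam ω

lemma blockHit_mem_Icc (lam : ℕ → ℤ) (d k : ℕ) (ω : Fin N → Bool) :
    blockHit lam d k ω ∈ Set.Icc 0 1 := by
  unfold blockHit
  split_ifs <;> norm_num

lemma card_le_sum_expect_blockHit_sub_le (lam : ℕ → ℤ) (d : ℕ) {M : ℕ} (hM : 0 < M) {t : ℝ}
    (ht : 0 ≤ t) :
    (#{ω : Fin N → Bool |
        t ≤ ∑ k ∈ range M, (𝔼 ω' : Fin N → Bool, blockHit lam d k ω' - blockHit lam d k ω)} : ℝ)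
      ≤ Fintype.card (Fin N → Bool) * exp (-(t ^ 2 / (2 * M))) := by
  refine card_le_sum_le_exp (A := range M)
    (V := fun k ω => 𝔼 ω' : Fin N → Bool, blockHit lam d k ω' - blockHit lam d k ω)
    (s := fun k => {j : Fin N | (j : ℕ) / (d + 1) = k})
    (fun k _ ω ω' h => congrArg (_ - ·) (dependsOn_blockHit lam d k h))
    (fun k _ k' _ hkk' => Set.disjoint_left.mpr fun j hj hj' => hkk' (hj.symm.trans hj'))
    (fun k _ => by rw [Finset.expect_sub_distrib, Fintype.expect_const, sub_self])
    (fun k _ ω => ?_) ht (by exact_mod_cast hM) (by rw [card_range])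
  obtain ⟨h0, h1⟩ := blockHit_mem_Icc lam d k ω
  have hE0 : 0 ≤ 𝔼 ω' : Fin N → Bool, blockHit lam d k ω' :=
    Finset.expect_nonneg fun ω' _ => (blockHit_mem_Icc lam d k ω').1
  have hE1 : 𝔼 ω' : Fin N → Bool, blockHit lam d k ω' ≤ 1 :=
    Finset.expect_le univ_nonempty fun ω' _ => (blockHit_mem_Icc lam d k ω').2
  rw [abs_le]
  constructor <;> linarith

lemma card_Bf_lt_lt_card_div_two {lam : ℕ → ℤ} {d M i₀ : ℕ} (hi₀ : i₀ ≤ d)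
    (hlam : lam i₀ ≠ 0) (hM : 4 ^ (d + 3) ≤ M) :
    (#{ω : Fin (M * (d + 1)) → Bool |
        (Bf (toSet ω) lam d (M * (d + 1) - 1) : ℝ) < M / 2 ^ (d + 2)} : ℝ)
      < Fintype.card (Fin (M * (d + 1)) → Bool) / 2 := by
  set N := M * (d + 1)
  set p : ℝ := (1 / 2) ^ (d + 1)
  have hexpect : M * p ≤ ∑ k ∈ range M, 𝔼 ω : Fin N → Bool, blockHit lam d k ω := by
    rw [show (M : ℝ) * p = ∑ _k ∈ range M, p by rw [Finset.sum_const, card_range, nsmul_eq_mul]]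
    refine Finset.sum_le_sum fun k hk => expect_blockHit_ge hi₀ hlam ?_
    have := Nat.mul_le_mul_right (d + 1) (mem_range.mp hk)
    rw [Nat.succ_mul] at this
    omega
  have hsub : ({ω : Fin N → Bool | (Bf (toSet ω) lam d (N - 1) : ℝ) < M / 2 ^ (d + 2)} : Finset _)
      ⊆ ({ω | M * p / 2 ≤ ∑ k ∈ range M,
          (𝔼 ω' : Fin N → Bool, blockHit lam d k ω' - blockHit lam d k ω)} : Finset _) :=
    fun ω hω => by
      simp only [Finset.mem_filter, Finset.mem_univ, true_and] at hω ⊢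
      have hhit : ∑ k ∈ range M, blockHit lam d k ω ≤ Bf (toSet ω) lam d (N - 1) :=
        sum_blockHit_le_Bf lam d M ω
      have hp : (M : ℝ) / 2 ^ (d + 2) = M * p / 2 := by
        simp only [p, div_pow, one_pow, pow_succ]
        ring
      rw [Finset.sum_sub_distrib]
      linarith
  have hMpos : 0 < M := lt_of_lt_of_le (by positivity) hM
  have hcard : (0 : ℝ) < Fintype.card (Fin N → Bool) := by exact_mod_cast Fintype.card_pos
  calc (#{ω : Fin N → Bool | (Bf (toSet ω) lam d (N - 1) : ℝ) < M / 2 ^ (d + 2)} : ℝ)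
      ≤ Fintype.card (Fin N → Bool) * exp (-((M * p / 2) ^ 2 / (2 * M))) :=
        (Nat.cast_le.mpr (Finset.card_le_card hsub)).trans
          (card_le_sum_expect_blockHit_sub_le lam d hMpos (by positivity))
    _ < Fintype.card (Fin N → Bool) / 2 := by
        linarith [mul_lt_mul_of_pos_left (exp_neg_sq_div_lt_half_of_four_pow_le hM) hcard]

end RandomSubset

theorem stmt11_general (d : ℕ) (lam : ℕ → ℤ)
    (hlam : ∃ i ≤ d, lam i ≠ 0) :
    ∃ M₀ : ℕ, ∀ M : ℕ, M₀ ≤ M →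
      ∃ C : Set ℕ, C ⊆ Set.Icc 0 (M * (d + 1) - 1) ∧
        (∀ n : ℕ, |(Rf C n : ℝ) - Rz C ((n : ℤ) - 1)|
            ≤ 12 * Real.sqrt ((M * (d + 1) : ℝ) * Real.log (M * (d + 1)))) ∧
        ((M : ℝ) / 2 ^ (d + 2) ≤ (Bf C lam d (M * (d + 1) - 1) : ℝ)) := by
  obtain ⟨i₀, hi₀, hlam⟩ := hlam
  refine ⟨4 ^ (d + 3), fun M hM => ?_⟩
  have hN : 8 ≤ M * (d + 1) := by
    have : 4 ^ 3 ≤ 4 ^ (d + 3) := Nat.pow_le_pow_right (by norm_num) (by omega)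
    nlinarith
  have hbad := add_lt_add_of_le_of_lt (RandomSubset.card_exists_abs_Rf_sub_Rz_gt_le_card_div_two hN)
    (RandomSubset.card_Bf_lt_lt_card_div_two hi₀ hlam hM)
  rw [add_halves, ← Nat.cast_add, Nat.cast_lt] at hbad
  obtain ⟨ω, -, hω⟩ := Finset.exists_mem_notMem_of_card_lt_card
    ((Finset.card_union_le _ _).trans_lt (hbad.trans_eq Finset.card_univ.symm))
  simp only [Finset.mem_union, Finset.mem_filter, Finset.mem_univ, true_and, not_or, not_exists,
    not_lt] at hω
  refine ⟨RandomSubset.toSet ω, RandomSubset.toSet_subset ω, fun n => ?_, hω.2⟩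
  simpa using hω.1 n

theorem stmt11 (d : ℕ) (lam : ℕ → ℤ)
    (hlam : ∃ i ≤ d, lam i ≠ 0)
    (hsum : ∑ i ∈ Finset.range (d + 1), lam i = 0) :
    ∃ M₀ : ℕ, ∀ M : ℕ, M₀ ≤ M →
      ∃ C : Set ℕ, C ⊆ Set.Icc 0 (M * (d + 1) - 1) ∧
        (∀ n : ℕ, |(Rf C n : ℝ) - Rz C ((n : ℤ) - 1)|
            ≤ 12 * Real.sqrt ((M * (d + 1) : ℝ) * Real.log (M * (d + 1)))) ∧
        ((M : ℝ) / 2 ^ (d + 2) ≤ (Bf C lam d (M * (d + 1) - 1) : ℝ)) :=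
  stmt11_general d lam hlam
end
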